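/- arXiv:1706.02471 — 3 statements merged into one kernel-verified Lean document; each statement's English description precedes it below -/
import Mathlib

section
/- For every μ ∈ (0,1) and every integer t ≥ 1, the weighted geometric sum satisfies ∑_{k=1}^t μ (1−μ)^{k−1} √k ≤ μ^{−1/2}. -/
open Finset Real

/-- Weighted geometric sum bound. -/
theorem weighted_geometric_sqrt_sum_bound (m : ℝ) (hm : m ∈ Set.Ioo (0 : ℝ) 1)
    (t : ℕ) (ht : 1 ≤ t) :
    ∑ k ∈ Finset.Icc 1 t, m * (1 - m) ^ (k - 1) * Real.sqrt k ≤ m ^ (-(1 : ℝ) / 2) := by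
  obtain ⟨hm0, hm1⟩ := hm
  set x : ℝ := 1 - m with hxdef
  have hx0 : 0 ≤ x := by simp [hxdef]; linarith
  have hx1 : x < 1 := by simp [hxdef]; linarith
  have hxa : |x| < 1 := by rw [abs_of_nonneg hx0]; exact hx1
  -- reindexing : Icc 1 t ↔ range t
  have hreidx : ∀ f : ℕ → ℝ, ∑ k ∈ Finset.Icc 1 t, f k = ∑ i ∈ Finset.range t, f (i + 1) := by
    intro f
    rw [← Finset.Ico_add_one_right_eq_Icc, Finset.sum_Ico_eq_sum_range]
    simp [add_comm]
  -- bound 1 : geometric mass is at most 1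
  have hS1 : ∑ k ∈ Finset.Icc 1 t, m * x ^ (k - 1) ≤ 1 := by
    rw [hreidx]
    have hgeom : HasSum (fun n : ℕ => x ^ n) (1 / (1 - x)) := by
      simpa using hasSum_geometric_of_lt_one hx0 hx1
    have hsum : ∑ i ∈ Finset.range t, x ^ i ≤ 1 / (1 - x) :=
      sum_le_hasSum _ (fun i _ => pow_nonneg hx0 i) hgeom
    have : ∑ i ∈ Finset.range t, m * x ^ (i + 1 - 1) = m * ∑ i ∈ Finset.range t, x ^ i := by
      rw [Finset.mul_sum]; congr 1
    rw [this]
    have h1x : 1 - x = m := by simp [hxdef]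
    calc m * ∑ i ∈ Finset.range t, x ^ i ≤ m * (1 / (1 - x)) := by
          exact mul_le_mul_of_nonneg_left hsum hm0.le
      _ = 1 := by rw [h1x]; field_simp
  -- bound 2 : the mean is at most 1/m
  have hS2 : ∑ k ∈ Finset.Icc 1 t, m * x ^ (k - 1) * (k : ℝ) ≤ 1 / m := by
    rw [hreidx]
    have hA : HasSum (fun n : ℕ => (n : ℝ) * x ^ n) (x / (1 - x) ^ 2) :=
      hasSum_coe_mul_geometric_of_norm_lt_one (by simpa using hxa)
    have hB : HasSum (fun n : ℕ => x ^ n) (1 / (1 - x)) := by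
      simpa using hasSum_geometric_of_lt_one hx0 hx1
    have hAB : HasSum (fun n : ℕ => ((n : ℝ) + 1) * x ^ n) (1 / (1 - x) ^ 2) := by
      have h := hA.add hB
      have hne : (1 : ℝ) - x ≠ 0 := by
        have : 1 - x = m := by simp [hxdef]
        rw [this]; exact ne_of_gt hm0
      have heq : x / (1 - x) ^ 2 + 1 / (1 - x) = 1 / (1 - x) ^ 2 := by
        field_simp; ring
      rw [heq] at h
      convert h using 2 with n
      ring
    have hsum : ∑ i ∈ Finset.range t, ((i : ℝ) + 1) * x ^ i ≤ 1 / (1 - x) ^ 2 :=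
      sum_le_hasSum _
        (fun i _ => mul_nonneg (by positivity) (pow_nonneg hx0 i)) hAB
    have hconv : ∑ i ∈ Finset.range t, m * x ^ (i + 1 - 1) * ((i : ℕ) + 1 : ℝ) =
        m * ∑ i ∈ Finset.range t, ((i : ℝ) + 1) * x ^ i := by
      rw [Finset.mul_sum]
      refine Finset.sum_congr rfl fun i _ => ?_
      push_cast
      ring
    have h1x : 1 - x = m := by simp [hxdef]
    calc ∑ i ∈ Finset.range t, m * x ^ (i + 1 - 1) * ((i + 1 : ℕ) : ℝ)
        = m * ∑ i ∈ Finset.range t, ((i : ℝ) + 1) * x ^ i := by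
          rw [← hconv]; refine Finset.sum_congr rfl fun i _ => ?_; push_cast; ring
      _ ≤ m * (1 / (1 - x) ^ 2) := mul_le_mul_of_nonneg_left hsum hm0.le
      _ = 1 / m := by rw [h1x]; field_simp
  -- Cauchy–Schwarz
  set S := ∑ k ∈ Finset.Icc 1 t, m * x ^ (k - 1) * Real.sqrt k with hSdef
  have hS_nonneg : 0 ≤ S := by
    refine Finset.sum_nonneg fun k _ => ?_
    exact mul_nonneg (mul_nonneg hm0.le (pow_nonneg hx0 _)) (Real.sqrt_nonneg _)
  have hCS : S ^ 2 ≤ (∑ k ∈ Finset.Icc 1 t, m * x ^ (k - 1)) *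
      (∑ k ∈ Finset.Icc 1 t, m * x ^ (k - 1) * (k : ℝ)) := by
    have key := Finset.sum_mul_sq_le_sq_mul_sq (Finset.Icc 1 t)
      (fun k => Real.sqrt (m * x ^ (k - 1)))
      (fun k => Real.sqrt (m * x ^ (k - 1)) * Real.sqrt k)
    have h1 : ∀ k ∈ Finset.Icc 1 t,
        Real.sqrt (m * x ^ (k - 1)) * (Real.sqrt (m * x ^ (k - 1)) * Real.sqrt k) =
          m * x ^ (k - 1) * Real.sqrt k := by
      intro k _
      rw [← mul_assoc, Real.mul_self_sqrt (mul_nonneg hm0.le (pow_nonneg hx0 _))]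
    have h2 : ∀ k ∈ Finset.Icc 1 t,
        Real.sqrt (m * x ^ (k - 1)) ^ 2 = m * x ^ (k - 1) := by
      intro k _
      exact Real.sq_sqrt (mul_nonneg hm0.le (pow_nonneg hx0 _))
    have h3 : ∀ k ∈ Finset.Icc 1 t,
        (Real.sqrt (m * x ^ (k - 1)) * Real.sqrt k) ^ 2 = m * x ^ (k - 1) * (k : ℝ) := by
      intro k _
      rw [mul_pow, Real.sq_sqrt (mul_nonneg hm0.le (pow_nonneg hx0 _)),
        Real.sq_sqrt (Nat.cast_nonneg k)]
    rw [Finset.sum_congr rfl h1, Finset.sum_congr rfl h2, Finset.sum_congr rfl h3] at key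
    exact key
  have hsq : S ^ 2 ≤ 1 / m := by
    calc S ^ 2 ≤ (∑ k ∈ Finset.Icc 1 t, m * x ^ (k - 1)) *
        (∑ k ∈ Finset.Icc 1 t, m * x ^ (k - 1) * (k : ℝ)) := hCS
      _ ≤ 1 * (1 / m) := by
          refine mul_le_mul hS1 hS2 ?_ (by norm_num)
          refine Finset.sum_nonneg fun k _ => ?_
          exact mul_nonneg (mul_nonneg hm0.le (pow_nonneg hx0 _)) (Nat.cast_nonneg k)
      _ = 1 / m := one_mul _
  have hrpow : m ^ (-(1 : ℝ) / 2) = Real.sqrt (1 / m) := by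
    rw [one_div, Real.sqrt_inv, Real.sqrt_eq_rpow, neg_div]
    exact Real.rpow_neg hm0.le (1 / 2)
  rw [hrpow]
  exact (Real.le_sqrt hS_nonneg (by positivity)).mpr hsq
end

section
/- Deterministic weighted-sum bound via partial sums: let x(1),…,x(t) ∈ ℝ^d with ‖∑_{i=k}^t x(i)‖ ≤ C√(t−k+1) for all 1 ≤ k ≤ t and some constant C ≥ 0, let Z(1),…,Z(t) be d×d matrices with ‖Z(k)‖ ≤ Z* for all k, let Y(0) be a d×d matrix, and define Y(k) = (1−μ)Y(k−1) + μ Z(k). Then ‖∑_{k=1}^t (1−μ)^{t−k} Y(k) x(k)‖ ≤ C (‖Y(0)‖ + Z*) μ^{−1/2}, for any μ ∈ (0,1). -/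
open Finset Matrix

private lemma geom_id' (m : ℝ) (t : ℕ) :
    ∑ i ∈ Finset.range t, m * (1 - m) ^ i = 1 - (1 - m) ^ t := by
  induction t with
  | zero => simp
  | succ n ih => rw [Finset.sum_range_succ, ih, pow_succ]; ring

private lemma lin_id' (m : ℝ) (t : ℕ) :
    m ^ 2 * ∑ i ∈ Finset.range t, ((i : ℝ) + 1) * (1 - m) ^ i
      = 1 - (1 - m) ^ t * (1 + (t : ℝ) * m) := by
  induction t with
  | zero => simp
  | succ n ih =>
    rw [Finset.sum_range_succ, mul_add, ih]
    push_cast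
    ring

private lemma pow_sqrt_le' (m : ℝ) (hm0 : 0 < m) (hm1 : m < 1) (t : ℕ) :
    (1 - m) ^ t * Real.sqrt t ≤ (Real.sqrt m)⁻¹ := by
  have hq0 : (0:ℝ) ≤ 1 - m := by linarith
  have hq1 : 1 - m ≤ 1 := by linarith
  have hb : 1 + (t:ℝ) * m ≤ (1 + m) ^ t := one_add_mul_le_pow (by linarith) t
  have hpt : (0:ℝ) ≤ (1 - m) ^ t := pow_nonneg hq0 t
  have h2 : (1 + m) ^ t * (1 - m) ^ t ≤ 1 := by
    rw [← mul_pow]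
    apply pow_le_one₀ (by nlinarith) (by nlinarith)
  have h3 : (t:ℝ) * m * (1 - m) ^ t ≤ 1 := by nlinarith
  have h4 : (1 - m) ^ (2 * t) ≤ (1 - m) ^ t :=
    pow_le_pow_of_le_one hq0 hq1 (by omega)
  have h5 : ((1 - m) ^ t) ^ 2 * (t:ℝ) ≤ 1 / m := by
    rw [le_div_iff₀ hm0, ← pow_mul, Nat.mul_comm]
    have ht0 : (0:ℝ) ≤ (t:ℝ) * m := by positivity
    nlinarith [mul_le_mul_of_nonneg_left h4 ht0]
  calc (1 - m) ^ t * Real.sqrt t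
      = Real.sqrt (((1 - m) ^ t) ^ 2 * t) := by
        rw [Real.sqrt_mul (sq_nonneg _), Real.sqrt_sq hpt]
    _ ≤ Real.sqrt (1 / m) := Real.sqrt_le_sqrt h5
    _ = (Real.sqrt m)⁻¹ := by rw [one_div, Real.sqrt_inv]

private lemma weight_sum_le' (m : ℝ) (hm0 : 0 < m) (hm1 : m < 1) (t : ℕ) :
    ∑ i ∈ Finset.range t, m * (1 - m) ^ i * Real.sqrt ((i : ℝ) + 1)
      ≤ (Real.sqrt m)⁻¹ := by
  have hq0 : (0:ℝ) ≤ 1 - m := by linarith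
  set f : ℕ → ℝ := fun i => Real.sqrt (m * (1 - m) ^ i) with hf
  set g : ℕ → ℝ := fun i => Real.sqrt (m * (1 - m) ^ i * ((i:ℝ) + 1)) with hg
  have hfg : ∀ i, f i * g i = m * (1 - m) ^ i * Real.sqrt ((i:ℝ) + 1) := by
    intro i
    have h1 : (0:ℝ) ≤ m * (1 - m) ^ i := by positivity
    rw [hf, hg]
    simp only
    rw [Real.sqrt_mul h1, ← mul_assoc, Real.mul_self_sqrt h1]
  have hCS := Finset.sum_mul_sq_le_sq_mul_sq (Finset.range t) f g
  have hf2 : ∑ i ∈ Finset.range t, (f i) ^ 2 = ∑ i ∈ Finset.range t, m * (1 - m) ^ i :=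
    Finset.sum_congr rfl fun i _ => Real.sq_sqrt (by positivity)
  have hg2 : ∑ i ∈ Finset.range t, (g i) ^ 2
      = ∑ i ∈ Finset.range t, m * (1 - m) ^ i * ((i:ℝ) + 1) :=
    Finset.sum_congr rfl fun i _ => Real.sq_sqrt (by positivity)
  have hA : ∑ i ∈ Finset.range t, m * (1 - m) ^ i ≤ 1 := by
    rw [geom_id']; nlinarith [pow_nonneg hq0 t]
  have hB : ∑ i ∈ Finset.range t, m * (1 - m) ^ i * ((i:ℝ) + 1) ≤ 1 / m := by
    rw [le_div_iff₀ hm0]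
    have e : (∑ i ∈ Finset.range t, m * (1 - m) ^ i * ((i:ℝ) + 1)) * m
        = m ^ 2 * ∑ i ∈ Finset.range t, ((i:ℝ) + 1) * (1 - m) ^ i := by
      rw [Finset.sum_mul, Finset.mul_sum]
      exact Finset.sum_congr rfl fun i _ => by ring
    rw [e, lin_id']
    have h0 : (0:ℝ) ≤ (1 - m) ^ t * (1 + (t:ℝ) * m) := by positivity
    linarith
  have hBnn : (0:ℝ) ≤ ∑ i ∈ Finset.range t, m * (1 - m) ^ i * ((i:ℝ) + 1) :=
    Finset.sum_nonneg fun i _ => by positivity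
  have hpos : 0 ≤ ∑ i ∈ Finset.range t, f i * g i :=
    Finset.sum_nonneg fun i _ => mul_nonneg (Real.sqrt_nonneg _) (Real.sqrt_nonneg _)
  have hsq : (∑ i ∈ Finset.range t, f i * g i) ^ 2 ≤ 1 / m := by
    rw [hf2, hg2] at hCS
    calc (∑ i ∈ Finset.range t, f i * g i) ^ 2 ≤ _ := hCS
      _ ≤ 1 * (1 / m) := mul_le_mul hA hB hBnn zero_le_one
      _ = 1 / m := one_mul _
  calc ∑ i ∈ Finset.range t, m * (1 - m) ^ i * Real.sqrt ((i:ℝ) + 1)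
      = ∑ i ∈ Finset.range t, f i * g i :=
        Finset.sum_congr rfl fun i _ => (hfg i).symm
    _ = Real.sqrt ((∑ i ∈ Finset.range t, f i * g i) ^ 2) := (Real.sqrt_sq hpos).symm
    _ ≤ Real.sqrt (1 / m) := Real.sqrt_le_sqrt hsq
    _ = (Real.sqrt m)⁻¹ := by rw [one_div, Real.sqrt_inv]

private lemma weight_sum_Icc_le' (m : ℝ) (hm0 : 0 < m) (hm1 : m < 1) (t : ℕ) :
    ∑ j ∈ Finset.Icc 1 t, m * (1 - m) ^ (t - j) * Real.sqrt ((t:ℝ) - (j:ℝ) + 1)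
      ≤ (Real.sqrt m)⁻¹ := by
  have h : ∑ j ∈ Finset.Icc 1 t, m * (1 - m) ^ (t - j) * Real.sqrt ((t:ℝ) - (j:ℝ) + 1)
      = ∑ i ∈ Finset.range t, m * (1 - m) ^ i * Real.sqrt ((i:ℝ) + 1) := by
    refine Finset.sum_nbij' (fun j => t - j) (fun i => t - i) ?_ ?_ ?_ ?_ ?_
    · intro j hj; simp only [Finset.mem_Icc] at hj; simp only [Finset.mem_range]; omega
    · intro i hi; simp only [Finset.mem_range] at hi; simp only [Finset.mem_Icc]; omega
    · intro j hj; simp only [Finset.mem_Icc] at hj; show t - (t - j) = j; omega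
    · intro i hi; simp only [Finset.mem_range] at hi; show t - (t - i) = i; omega
    · intro j hj
      simp only [Finset.mem_Icc] at hj
      rw [Nat.cast_sub hj.2]
  rw [h]
  exact weight_sum_le' m hm0 hm1 t
private lemma sum_Icc_Icc_comm' {M : Type*} [AddCommMonoid M] (t : ℕ) (f : ℕ → ℕ → M) :
    ∑ k ∈ Finset.Icc 1 t, ∑ j ∈ Finset.Icc 1 k, f j k
      = ∑ j ∈ Finset.Icc 1 t, ∑ k ∈ Finset.Icc j t, f j k := by
  have h := Finset.sum_Ico_Ico_comm 1 (t + 1) (fun a b => f a b)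
  simp only [Finset.Ico_add_one_right_eq_Icc] at h
  exact h.symm

private lemma Y_closed_form' {d : ℕ} (m : ℝ)
    (Y Z : ℕ → Matrix (Fin d) (Fin d) ℝ)
    (hY : ∀ k, 1 ≤ k → Y k = (1 - m) • Y (k - 1) + m • Z k) (k : ℕ) :
    Matrix.toEuclideanCLM (𝕜 := ℝ) (Y k)
      = (1 - m) ^ k • Matrix.toEuclideanCLM (𝕜 := ℝ) (Y 0)
        + ∑ j ∈ Finset.Icc 1 k,
            (m * (1 - m) ^ (k - j)) • Matrix.toEuclideanCLM (𝕜 := ℝ) (Z j) := by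
  induction k with
  | zero => simp
  | succ n ih =>
    have h1 : Y (n + 1) = (1 - m) • Y n + m • Z (n + 1) := by
      simpa using hY (n + 1) (Nat.le_add_left 1 n)
    have e1 : ∀ j ∈ Finset.Icc 1 n,
        (m * (1 - m) ^ (n + 1 - j)) • Matrix.toEuclideanCLM (𝕜 := ℝ) (Z j)
          = (1 - m) • ((m * (1 - m) ^ (n - j)) • Matrix.toEuclideanCLM (𝕜 := ℝ) (Z j)) := by
      intro j hj
      simp only [Finset.mem_Icc] at hj
      rw [smul_smul]
      congr 1
      have h2 : n + 1 - j = (n - j) + 1 := by omega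
      rw [h2, pow_succ]; ring
    rw [h1, map_add, _root_.map_smul, _root_.map_smul, ih,
      Finset.sum_Icc_succ_top (by omega : 1 ≤ n + 1),
      Finset.sum_congr rfl e1, ← Finset.smul_sum, smul_add, smul_smul, ← pow_succ']
    simp only [Nat.sub_self, pow_zero, mul_one]
    abel

/-- Deterministic weighted-sum bound via partial sums. -/
theorem weighted_sum_partial_sum_bound {d : ℕ} (t : ℕ) (ht : 1 ≤ t)
    (m C Zstar : ℝ) (hm : m ∈ Set.Ioo (0 : ℝ) 1) (hC : 0 ≤ C)
    (x : ℕ → EuclideanSpace ℝ (Fin d))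
    (Y Z : ℕ → Matrix (Fin d) (Fin d) ℝ)
    (hx : ∀ k, 1 ≤ k → k ≤ t →
      ‖∑ i ∈ Finset.Icc k t, x i‖ ≤ C * Real.sqrt ((t : ℝ) - (k : ℝ) + 1))
    (hZ : ∀ k, 1 ≤ k → k ≤ t → ‖Matrix.toEuclideanCLM (𝕜 := ℝ) (Z k)‖ ≤ Zstar)
    (hY : ∀ k, 1 ≤ k → Y k = (1 - m) • Y (k - 1) + m • Z k) :
    ‖∑ k ∈ Finset.Icc 1 t, (1 - m) ^ (t - k) • Matrix.toEuclideanCLM (𝕜 := ℝ) (Y k) (x k)‖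
      ≤ C * (‖Matrix.toEuclideanCLM (𝕜 := ℝ) (Y 0)‖ + Zstar) * m ^ (-(1 : ℝ) / 2) := by
  obtain ⟨hm0, hm1⟩ := hm
  have hq0 : (0:ℝ) ≤ 1 - m := by linarith
  have hZ0 : 0 ≤ Zstar := le_trans (norm_nonneg _) (hZ 1 le_rfl ht)
  have hsm : 0 < Real.sqrt m := Real.sqrt_pos.2 hm0
  have key : (∑ k ∈ Finset.Icc 1 t,
        (1 - m) ^ (t - k) • Matrix.toEuclideanCLM (𝕜 := ℝ) (Y k) (x k))
      = (1 - m) ^ t • Matrix.toEuclideanCLM (𝕜 := ℝ) (Y 0) (∑ i ∈ Finset.Icc 1 t, x i)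
        + ∑ j ∈ Finset.Icc 1 t, (m * (1 - m) ^ (t - j)) •
            Matrix.toEuclideanCLM (𝕜 := ℝ) (Z j) (∑ k ∈ Finset.Icc j t, x k) := by
    have step1 : ∀ k ∈ Finset.Icc 1 t,
        (1 - m) ^ (t - k) • Matrix.toEuclideanCLM (𝕜 := ℝ) (Y k) (x k)
          = (1 - m) ^ t • Matrix.toEuclideanCLM (𝕜 := ℝ) (Y 0) (x k)
            + ∑ j ∈ Finset.Icc 1 k, (m * (1 - m) ^ (t - j)) •
                Matrix.toEuclideanCLM (𝕜 := ℝ) (Z j) (x k) := by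
      intro k hk
      simp only [Finset.mem_Icc] at hk
      rw [Y_closed_form' m Y Z hY k]
      simp only [ContinuousLinearMap.add_apply, ContinuousLinearMap.smul_apply,
        ContinuousLinearMap.sum_apply]
      rw [smul_add, smul_smul, Finset.smul_sum]
      congr 1
      · have h2 : (t - k) + k = t := by omega
        rw [← pow_add, h2]
      · refine Finset.sum_congr rfl fun j hj => ?_
        simp only [Finset.mem_Icc] at hj
        rw [smul_smul]
        congr 1
        have h3 : t - j = (t - k) + (k - j) := by omega
        rw [h3, pow_add]; ring
    rw [Finset.sum_congr rfl step1, Finset.sum_add_distrib]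
    congr 1
    · rw [← Finset.smul_sum, ← map_sum]
    · rw [sum_Icc_Icc_comm' t (fun j k => (m * (1 - m) ^ (t - j)) •
        Matrix.toEuclideanCLM (𝕜 := ℝ) (Z j) (x k))]
      refine Finset.sum_congr rfl fun j _ => ?_
      rw [← Finset.smul_sum, ← map_sum]
  rw [key]
  have hxs := hx 1 le_rfl ht
  have e : (t:ℝ) - ((1:ℕ):ℝ) + 1 = (t:ℝ) := by push_cast; ring
  rw [e] at hxs
  have hT1 : ‖(1 - m) ^ t • Matrix.toEuclideanCLM (𝕜 := ℝ) (Y 0) (∑ i ∈ Finset.Icc 1 t, x i)‖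
      ≤ ‖Matrix.toEuclideanCLM (𝕜 := ℝ) (Y 0)‖ * C * (Real.sqrt m)⁻¹ := by
    calc ‖(1 - m) ^ t • Matrix.toEuclideanCLM (𝕜 := ℝ) (Y 0) (∑ i ∈ Finset.Icc 1 t, x i)‖
        = (1 - m) ^ t * ‖Matrix.toEuclideanCLM (𝕜 := ℝ) (Y 0) (∑ i ∈ Finset.Icc 1 t, x i)‖ := by
          rw [norm_smul, Real.norm_eq_abs, abs_of_nonneg (pow_nonneg hq0 t)]
      _ ≤ (1 - m) ^ t * (‖Matrix.toEuclideanCLM (𝕜 := ℝ) (Y 0)‖ * (C * Real.sqrt t)) := by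
          refine mul_le_mul_of_nonneg_left ?_ (pow_nonneg hq0 t)
          exact le_trans (ContinuousLinearMap.le_opNorm _ _)
            (mul_le_mul_of_nonneg_left hxs (norm_nonneg _))
      _ = ‖Matrix.toEuclideanCLM (𝕜 := ℝ) (Y 0)‖ * C * ((1 - m) ^ t * Real.sqrt t) := by ring
      _ ≤ ‖Matrix.toEuclideanCLM (𝕜 := ℝ) (Y 0)‖ * C * (Real.sqrt m)⁻¹ := by
          exact mul_le_mul_of_nonneg_left (pow_sqrt_le' m hm0 hm1 t)
            (mul_nonneg (norm_nonneg _) hC)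
  have hT2 : ‖∑ j ∈ Finset.Icc 1 t, (m * (1 - m) ^ (t - j)) •
        Matrix.toEuclideanCLM (𝕜 := ℝ) (Z j) (∑ k ∈ Finset.Icc j t, x k)‖
      ≤ Zstar * C * (Real.sqrt m)⁻¹ := by
    calc ‖∑ j ∈ Finset.Icc 1 t, (m * (1 - m) ^ (t - j)) •
          Matrix.toEuclideanCLM (𝕜 := ℝ) (Z j) (∑ k ∈ Finset.Icc j t, x k)‖
        ≤ ∑ j ∈ Finset.Icc 1 t, ‖(m * (1 - m) ^ (t - j)) •
            Matrix.toEuclideanCLM (𝕜 := ℝ) (Z j) (∑ k ∈ Finset.Icc j t, x k)‖ :=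
          norm_sum_le _ _
      _ ≤ ∑ j ∈ Finset.Icc 1 t,
            m * (1 - m) ^ (t - j) * Real.sqrt ((t:ℝ) - (j:ℝ) + 1) * (Zstar * C) := by
          refine Finset.sum_le_sum fun j hj => ?_
          simp only [Finset.mem_Icc] at hj
          have hc : (0:ℝ) ≤ m * (1 - m) ^ (t - j) := by positivity
          rw [norm_smul, Real.norm_eq_abs, abs_of_nonneg hc]
          calc m * (1 - m) ^ (t - j) *
                ‖Matrix.toEuclideanCLM (𝕜 := ℝ) (Z j) (∑ k ∈ Finset.Icc j t, x k)‖
              ≤ m * (1 - m) ^ (t - j) * (Zstar * (C * Real.sqrt ((t:ℝ) - (j:ℝ) + 1))) := by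
                refine mul_le_mul_of_nonneg_left ?_ hc
                exact le_trans (ContinuousLinearMap.le_opNorm _ _)
                  (mul_le_mul (hZ j hj.1 hj.2) (hx j hj.1 hj.2) (norm_nonneg _) hZ0)
            _ = m * (1 - m) ^ (t - j) * Real.sqrt ((t:ℝ) - (j:ℝ) + 1) * (Zstar * C) := by ring
      _ = (∑ j ∈ Finset.Icc 1 t,
            m * (1 - m) ^ (t - j) * Real.sqrt ((t:ℝ) - (j:ℝ) + 1)) * (Zstar * C) := by
          rw [← Finset.sum_mul]
      _ ≤ (Real.sqrt m)⁻¹ * (Zstar * C) := by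
          exact mul_le_mul_of_nonneg_right (weight_sum_Icc_le' m hm0 hm1 t)
            (mul_nonneg hZ0 hC)
      _ = Zstar * C * (Real.sqrt m)⁻¹ := by ring
  have hrpow : m ^ (-(1:ℝ) / 2) = (Real.sqrt m)⁻¹ := by
    rw [neg_div, Real.rpow_neg hm0.le, ← Real.sqrt_eq_rpow]
  rw [hrpow]
  calc ‖(1 - m) ^ t • Matrix.toEuclideanCLM (𝕜 := ℝ) (Y 0) (∑ i ∈ Finset.Icc 1 t, x i)
        + ∑ j ∈ Finset.Icc 1 t, (m * (1 - m) ^ (t - j)) •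
            Matrix.toEuclideanCLM (𝕜 := ℝ) (Z j) (∑ k ∈ Finset.Icc j t, x k)‖
      ≤ _ + _ := norm_add_le _ _
    _ ≤ ‖Matrix.toEuclideanCLM (𝕜 := ℝ) (Y 0)‖ * C * (Real.sqrt m)⁻¹
        + Zstar * C * (Real.sqrt m)⁻¹ := add_le_add hT1 hT2
    _ = C * (‖Matrix.toEuclideanCLM (𝕜 := ℝ) (Y 0)‖ + Zstar) * (Real.sqrt m)⁻¹ := by ring
end

section
/- Summation-by-parts identity for exponentially weighted recursive sequences: let Y(k) = (1−μ)Y(k−1) + μ Z(k) for d×d matrices and x(k) ∈ ℝ^d, and set S(t,k) = ∑_{i=k}^t x(i). Then ∑_{k=1}^t (1−μ)^{t−k} Y(k) x(k) = (1−μ)^t Y(0) S(t,1) + ∑_{k=1}^t μ (1−μ)^{k−1} Z(t−k+1) S(t, t−k+1). -/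
open Finset Matrix

/-- Summation-by-parts identity for exponentially weighted recursive sequences. -/
theorem summation_by_parts_weighted_recursion {d : ℕ} (m : ℝ)
    (hm : m ∈ Set.Ioo (0 : ℝ) 1)
    (Y Z : ℕ → Matrix (Fin d) (Fin d) ℝ)
    (hY : ∀ k : ℕ, 1 ≤ k → Y k = (1 - m) • Y (k - 1) + m • Z k)
    (x : ℕ → Fin d → ℝ)
    (S : ℕ → ℕ → Fin d → ℝ)
    (hS : ∀ t k, S t k = ∑ i ∈ Finset.Icc k t, x i)
    (t : ℕ) (ht : 1 ≤ t) :
    ∑ k ∈ Finset.Icc 1 t, (1 - m) ^ (t - k) • (Y k).mulVec (x k)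
      = (1 - m) ^ t • (Y 0).mulVec (S t 1)
        + ∑ k ∈ Finset.Icc 1 t,
            (m * (1 - m) ^ (k - 1)) • (Z (t - k + 1)).mulVec (S t (t - k + 1)) := by
  set g : ℕ → Fin d → ℝ := fun k => (1 - m) ^ (t - k) • (Y k).mulVec (S t (k + 1)) with hg
  have hgt : g t = 0 := by
    have : S t (t + 1) = 0 := by
      rw [hS]; simp
    simp [hg, this]
  have hstep : ∀ k ∈ Finset.Icc 1 t,
      (1 - m) ^ (t - k) • (Y k).mulVec (x k)
        = (g (k - 1) - g k) + (m * (1 - m) ^ (t - k)) • (Z k).mulVec (S t k) := by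
    intro k hk
    obtain ⟨hk1, hkt⟩ := Finset.mem_Icc.mp hk
    have hSk : S t k = x k + S t (k + 1) := by
      rw [hS, hS, ← Finset.Ioc_insert_left hkt, Finset.sum_insert (by simp),
        Finset.Icc_add_one_left_eq_Ioc]
    have hk1' : k - 1 + 1 = k := by omega
    have hpow : t - (k - 1) = (t - k) + 1 := by omega
    have hYk := hY k hk1
    simp only [hg, hk1', hpow, hYk, Matrix.add_mulVec, Matrix.smul_mulVec, hSk,
      Matrix.mulVec_add, pow_succ]
    module
  rw [Finset.sum_congr rfl hstep, Finset.sum_add_distrib]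
  have htel : ∑ k ∈ Finset.Icc 1 t, (g (k - 1) - g k) = g 0 := by
    rw [show Finset.Icc 1 t = Finset.Ico 1 (t + 1) by rw [Finset.Ico_add_one_right_eq_Icc],
      Finset.sum_Ico_eq_sum_range]
    simp only [Nat.add_sub_cancel]
    have h : ∀ i ∈ Finset.range t, g (1 + i - 1) - g (1 + i) = g i - g (i + 1) := by
      intro i _; rw [show 1 + i - 1 = i by omega, Nat.add_comm]
    rw [Finset.sum_congr rfl h, Finset.sum_range_sub' g t, hgt, sub_zero]
  have hg0 : g 0 = (1 - m) ^ t • (Y 0).mulVec (S t 1) := by simp [hg]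
  rw [htel, hg0]
  congr 1
  refine Finset.sum_nbij' (fun k => t + 1 - k) (fun k => t + 1 - k) ?_ ?_ ?_ ?_ ?_
  · intro a ha; simp only [Finset.mem_Icc] at *; omega
  · intro a ha; simp only [Finset.mem_Icc] at *; omega
  · intro a ha; simp only [Finset.mem_Icc] at ha; omega
  · intro a ha; simp only [Finset.mem_Icc] at ha; omega
  · intro a ha
    simp only [Finset.mem_Icc] at ha
    have h1 : t + 1 - a - 1 = t - a := by omega
    have h2 : t - (t + 1 - a) + 1 = a := by omega
    rw [h1, h2]
end
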